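/- arXiv:1705.06892 — 3 statements merged into one kernel-verified Lean document; each statement's English description precedes it below -/
import Mathlib

section
/- If f₁, f₂ are proper generalized polyhedral convex functions on X with (dom f₁) ∩ (dom f₂) ≠ ∅, then f₁ + f₂ is a proper generalized polyhedral convex function. -/
/-!
The epigraph of `f₁ + f₂` consists of the `(x, t)` for which some `s` has `f₁ x ≤ s` and
`f₂ x ≤ t - s`, i.e. of the `(x, t)` such that the line `(x, 0, t) + ℝ (0, 1, -1)` meets
`E = {(x, a, b) | f₁ x ≤ a, f₂ x ≤ b}`, an intersection of preimages of the two epigraphs under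
continuous linear maps and hence generalized polyhedral.

So it suffices that the points whose line in a direction `e` meets a generalized polyhedral set
`S = A ∩ {fᵢ ≤ αᵢ}` (`A` a closed affine subspace) again form a generalized polyhedral set. If `e`
is parallel to `A`, the line parameter is eliminated from the inequalities by Fourier–Motzkin.
Otherwise a Hahn–Banach functional `l` with `l e = 1`, constant on `A`, determines the parameter
as a continuous affine function of the point, and the set is a preimage of `S` under a continuous
affine map.
-/

open Pointwise

/-- A generalized polyhedral convex set: the intersection of a closed affine
subspace with finitely many closed half-spaces given by continuous linear
functionals. -/
def IsGPCS {X : Type*} [AddCommGroup X] [Module ℝ X] [TopologicalSpace X]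
    (D : Set X) : Prop :=
  ∃ (p : ℕ) (f : Fin p → (X →L[ℝ] ℝ)) (α : Fin p → ℝ)
    (x₀ : X) (W : Submodule ℝ X),
    IsClosed (x₀ +ᵥ (W : Set X)) ∧
    D = {x ∈ x₀ +ᵥ (W : Set X) | ∀ i, f i x ≤ α i}

/-- A polyhedral convex set: a finite intersection of closed half-spaces. -/
def IsPCS {X : Type*} [AddCommGroup X] [Module ℝ X] [TopologicalSpace X]
    (D : Set X) : Prop :=
  ∃ (p : ℕ) (f : Fin p → (X →L[ℝ] ℝ)) (α : Fin p → ℝ),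
    D = {x | ∀ i, f i x ≤ α i}

/-- `F` is a face of the convex set `C`. -/
def IsFaceOf {X : Type*} [AddCommGroup X] [Module ℝ X] (F C : Set X) : Prop :=
  Convex ℝ F ∧ F ⊆ C ∧
    ∀ ⦃x y : X⦄, x ∈ C → y ∈ C → ∀ t : ℝ, 0 < t → t < 1 →
      (1 - t) • x + t • y ∈ F → x ∈ F ∧ y ∈ F

section GeneralizedPolyhedral

variable {Y Z : Type*} [AddCommGroup Y] [Module ℝ Y] [AddCommGroup Z] [Module ℝ Z]

theorem AffineSubspace.coe_mk'_eq_vadd (x₀ : Y) (W : Submodule ℝ Y) :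
    (AffineSubspace.mk' x₀ W : Set Y) = x₀ +ᵥ (W : Set Y) := by
  ext y
  rw [SetLike.mem_coe, AffineSubspace.mem_mk', mem_leftAddCoset_iff, neg_add_eq_sub,
    SetLike.mem_coe, vsub_eq_sub]

variable [TopologicalSpace Y] [TopologicalSpace Z]

theorem isGPCS_empty : IsGPCS (∅ : Set Y) :=
  ⟨1, 0, fun _ => -1, 0, ⊤, by simp, by ext; simp⟩

theorem IsGPCS.exists_affineSubspace {S : Set Y} (h : IsGPCS S) :
    ∃ (A : AffineSubspace ℝ Y) (p : ℕ) (f : Fin p → Y →L[ℝ] ℝ) (α : Fin p → ℝ),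
      IsClosed (A : Set Y) ∧ S = {x ∈ (A : Set Y) | ∀ i, f i x ≤ α i} := by
  obtain ⟨p, f, α, x₀, W, hc, rfl⟩ := h
  exact ⟨.mk' x₀ W, p, f, α, by rwa [AffineSubspace.coe_mk'_eq_vadd],
    by rw [AffineSubspace.coe_mk'_eq_vadd]⟩

theorem isGPCS_of_affineSubspace {ι : Type*} [Finite ι] (A : AffineSubspace ℝ Y)
    (hA : IsClosed (A : Set Y)) (f : ι → Y →L[ℝ] ℝ) (α : ι → ℝ) :
    IsGPCS {x ∈ (A : Set Y) | ∀ i, f i x ≤ α i} := by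
  rcases A.eq_bot_or_nonempty with rfl | ⟨x₀, hx₀⟩
  · simpa using isGPCS_empty
  obtain ⟨p, ⟨e⟩⟩ := Finite.exists_equiv_fin ι
  refine ⟨p, f ∘ e.symm, α ∘ e.symm, x₀, A.direction, ?_, ?_⟩ <;>
    rw [← AffineSubspace.coe_mk'_eq_vadd, AffineSubspace.mk'_eq hx₀]
  · exact hA
  · ext x
    simp [← e.symm.forall_congr_right]

theorem IsGPCS.inter {S₁ S₂ : Set Y} (h₁ : IsGPCS S₁) (h₂ : IsGPCS S₂) :
    IsGPCS (S₁ ∩ S₂) := by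
  obtain ⟨A, p, f, α, hA, rfl⟩ := h₁.exists_affineSubspace
  obtain ⟨B, q, g, β, hB, rfl⟩ := h₂.exists_affineSubspace
  convert isGPCS_of_affineSubspace (A ⊓ B) (hA.inter hB)
    (Sum.elim f g) (Sum.elim α β) using 1
  ext x
  simp only [Set.mem_inter_iff, Set.mem_ofPred_eq, SetLike.mem_coe, AffineSubspace.mem_inf_iff,
    Sum.forall, Sum.elim_inl, Sum.elim_inr]
  tauto

theorem IsGPCS.preimage {S : Set Y} (h : IsGPCS S) (T : Z →L[ℝ] Y) : IsGPCS (T ⁻¹' S) := by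
  obtain ⟨A, p, f, α, hA, rfl⟩ := h.exists_affineSubspace
  exact isGPCS_of_affineSubspace (A.comap T.toLinearMap.toAffineMap)
    (hA.preimage T.continuous) (fun i => (f i).comp T) α

theorem IsGPCS.preimage_add_right [ContinuousAdd Y] {S : Set Y} (h : IsGPCS S) (c : Y) :
    IsGPCS ((· + c) ⁻¹' S) := by
  obtain ⟨A, p, f, α, hA, rfl⟩ := h.exists_affineSubspace
  have hcoe : ((-c +ᵥ A : AffineSubspace ℝ Y) : Set Y) = (· + c) ⁻¹' A := by
    ext y
    simp [Set.mem_vadd_set_iff_neg_vadd_mem, add_comm]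
  convert isGPCS_of_affineSubspace (-c +ᵥ A) (hcoe ▸ hA.preimage (continuous_add_const c))
    f (fun i => α i - f i c) using 1
  ext y
  simp [hcoe, le_sub_iff_add_le]

end GeneralizedPolyhedral

theorem Set.Finite.exists_between_of_forall_le {α : Type*} [ConditionallyCompleteLinearOrder α]
    [Nonempty α] {L U : Set α} (hL : L.Finite) (hU : U.Finite)
    (hLU : ∀ l ∈ L, ∀ u ∈ U, l ≤ u) : ∃ s, (∀ l ∈ L, l ≤ s) ∧ ∀ u ∈ U, s ≤ u := by
  rcases L.eq_empty_or_nonempty with rfl | hLne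
  · obtain ⟨s, hs⟩ := hU.bddBelow
    exact ⟨s, by simp, fun u hu => hs hu⟩
  · exact ⟨sSup L, fun l hl => le_csSup hL.bddAbove hl,
      fun u hu => csSup_le hLne fun l hl => hLU l hl u hu⟩

theorem exists_forall_mul_le_iff {ι : Type*} [Finite ι] (c b : ι → ℝ) :
    (∃ s : ℝ, ∀ i, s * c i ≤ b i) ↔
      (∀ i, c i = 0 → 0 ≤ b i) ∧ ∀ i j, 0 < c i → c j < 0 → c j * b i ≤ c i * b j := by
  constructor
  · rintro ⟨s, hs⟩
    refine ⟨fun i hi => by simpa [hi] using hs i, fun i j hi hj => ?_⟩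
    nlinarith [mul_le_mul_of_nonpos_left (hs i) hj.le, mul_le_mul_of_nonneg_left (hs j) hi.le]
  · rintro ⟨hzero, hpair⟩
    obtain ⟨s, hlower, hupper⟩ := Set.Finite.exists_between_of_forall_le
      (L := (fun j => b j / c j) '' {j | c j < 0}) (U := (fun i => b i / c i) '' {i | 0 < c i})
      (Set.toFinite _) (Set.toFinite _) <| by
        rintro _ ⟨j, hj, rfl⟩ _ ⟨i, hi, rfl⟩
        rw [div_le_iff_of_neg hj, div_mul_eq_mul_div, div_le_iff₀ hi]
        linarith [hpair i j hi hj]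
    refine ⟨s, fun i => ?_⟩
    rcases lt_trichotomy (c i) 0 with hi | hi | hi
    · exact (div_le_iff_of_neg hi).1 (hlower _ ⟨i, hi, rfl⟩)
    · simpa [hi] using hzero i hi
    · exact (le_div_iff₀ hi).1 (hupper _ ⟨i, hi, rfl⟩)

section Projection

variable {Y : Type*} [AddCommGroup Y] [Module ℝ Y] [TopologicalSpace Y]

theorem Submodule.exists_clm_eq_one_of_notMem [IsTopologicalAddGroup Y] [ContinuousSMul ℝ Y]
    [LocallyConvexSpace ℝ Y] {W : Submodule ℝ Y} (hW : IsClosed (W : Set Y)) {e : Y}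
    (he : e ∉ W) : ∃ l : Y →L[ℝ] ℝ, l e = 1 ∧ ∀ w ∈ W, l w = 0 := by
  obtain ⟨g, u, hgW, hge⟩ := geometric_hahn_banach_closed_point W.convex hW he
  -- `g` is bounded above on the subspace `W`, hence vanishes on it
  have hg : ∀ w ∈ W, g w = 0 := by
    intro w hw
    by_contra hne
    have := hgW ((u / g w) • w) (W.smul_mem _ hw)
    rw [map_smul, smul_eq_mul, div_mul_cancel₀ _ hne] at this
    exact this.false
  have hu : 0 < u := by simpa using hgW 0 W.zero_mem
  exact ⟨(g e)⁻¹ • g, by simp [(hu.trans hge).ne'], fun w hw => by simp [hg w hw]⟩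

theorem setOf_exists_add_smul_mem_eq_preimage {S : Set Y} {l : Y →L[ℝ] ℝ} {e : Y}
    (hle : l e = 1) {r : ℝ} (hlS : ∀ x ∈ S, l x = r) :
    {y | ∃ s : ℝ, y + s • e ∈ S} = (fun y => (y - l y • e) + r • e) ⁻¹' S := by
  ext y
  have hdecomp : ∀ s : ℝ, y + s • e = (y - l y • e) + (l y + s) • e := fun s => by
    rw [add_smul]; abel
  refine ⟨fun ⟨s, hs⟩ => ?_, fun hy => ⟨r - l y, ?_⟩⟩
  · have hr := hlS _ hs
    rw [map_add, map_smul, hle, smul_eq_mul, mul_one] at hr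
    rwa [hdecomp, hr] at hs
  · rwa [hdecomp, add_sub_cancel]

theorem isGPCS_setOf_exists_add_smul_mem_of_mem_direction {ι : Type*} [Finite ι]
    {A : AffineSubspace ℝ Y} (hA : IsClosed (A : Set Y)) (f : ι → Y →L[ℝ] ℝ) (α : ι → ℝ)
    {e : Y} (he : e ∈ A.direction) :
    IsGPCS {y | ∃ s : ℝ, y + s • e ∈ {x ∈ (A : Set Y) | ∀ i, f i x ≤ α i}} := by
  classical
  let c : ι → ℝ := fun i => f i e
  let κ := {i // c i = 0} ⊕ {ij : ι × ι // 0 < c ij.1 ∧ c ij.2 < 0}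
  let F : κ → Y →L[ℝ] ℝ :=
    Sum.elim (fun i => f i) (fun ij => c ij.1.1 • f ij.1.2 - c ij.1.2 • f ij.1.1)
  let β : κ → ℝ :=
    Sum.elim (fun i => α i) (fun ij => c ij.1.1 * α ij.1.2 - c ij.1.2 * α ij.1.1)
  convert isGPCS_of_affineSubspace A hA F β using 1
  ext y
  have hA_iff (s : ℝ) : y + s • e ∈ A ↔ y ∈ A := by
    rw [add_comm]
    exact AffineSubspace.vadd_mem_iff_mem_of_mem_direction (A.direction.smul_mem s he)
  have hf (s : ℝ) (i : ι) : f i (y + s • e) ≤ α i ↔ s * c i ≤ α i - f i y := by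
    rw [map_add, map_smul, smul_eq_mul, le_sub_iff_add_le']
  simp only [Set.mem_ofPred_eq, SetLike.mem_coe, hA_iff, hf, exists_and_left,
    and_congr_right_iff]
  intro _
  rw [exists_forall_mul_le_iff]
  simp only [κ, Sum.forall, Subtype.forall, Prod.forall, F, β, Sum.elim_inl, Sum.elim_inr,
    sub_apply, smul_apply, smul_eq_mul, sub_nonneg]
  refine and_congr Iff.rfl (forall₂_congr fun i j =>
    ⟨fun h hij => by linarith [h hij.1 hij.2], fun h hi hj => by linarith [h ⟨hi, hj⟩]⟩)

theorem IsGPCS.setOf_exists_add_smul_mem [IsTopologicalAddGroup Y] [ContinuousSMul ℝ Y]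
    [LocallyConvexSpace ℝ Y] {S : Set Y} (h : IsGPCS S) (e : Y) :
    IsGPCS {y | ∃ s : ℝ, y + s • e ∈ S} := by
  obtain ⟨A, p, f, α, hA, rfl⟩ := h.exists_affineSubspace
  rcases A.eq_bot_or_nonempty with rfl | ⟨x₀, hx₀⟩
  · simpa using isGPCS_empty
  by_cases he : e ∈ A.direction
  · exact isGPCS_setOf_exists_add_smul_mem_of_mem_direction hA f α he
  have hdir : IsClosed (A.direction : Set Y) := by
    rw [AffineSubspace.coe_direction_eq_vsub_set_right hx₀]
    exact (Homeomorph.subRight x₀).isClosedMap _ hA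
  obtain ⟨l, hle, hlA⟩ := A.direction.exists_clm_eq_one_of_notMem hdir he
  rw [setOf_exists_add_smul_mem_eq_preimage hle (r := l x₀) fun x hx =>
    sub_eq_zero.1 (by simpa using hlA _ (A.vsub_mem_direction hx.1 hx₀))]
  exact (h.preimage_add_right _).preimage (.id ℝ Y - l.smulRight e)

end Projection

theorem EReal.add_le_coe_iff_exists {a b : EReal} (ha : a ≠ ⊥) (hb : b ≠ ⊥) (t : ℝ) :
    a + b ≤ t ↔ ∃ s : ℝ, a ≤ s ∧ b ≤ ((t - s : ℝ) : EReal) := by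
  refine ⟨fun h => ?_, fun ⟨s, has, hbs⟩ => ?_⟩
  · have haT : a ≠ ⊤ := by
      rintro rfl
      simp [EReal.top_add_of_ne_bot hb] at h
    lift a to ℝ using ⟨haT, ha⟩
    refine ⟨a, le_rfl, ?_⟩
    rwa [EReal.coe_sub, EReal.le_sub_iff_add_le (.inl (EReal.coe_ne_bot a))
      (.inl (EReal.coe_ne_top a)), add_comm]
  · calc a + b ≤ s + ((t - s : ℝ) : EReal) := add_le_add has hbs
      _ = t := by rw [← EReal.coe_add, add_sub_cancel]

theorem isGPCS_epigraph_add {X : Type*} [AddCommGroup X] [Module ℝ X] [TopologicalSpace X]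
    [IsTopologicalAddGroup X] [ContinuousSMul ℝ X] [LocallyConvexSpace ℝ X] {f₁ f₂ : X → EReal}
    (hf₁ : ∀ x, f₁ x ≠ ⊥) (hf₂ : ∀ x, f₂ x ≠ ⊥)
    (hg₁ : IsGPCS {p : X × ℝ | f₁ p.1 ≤ (p.2 : EReal)})
    (hg₂ : IsGPCS {p : X × ℝ | f₂ p.1 ≤ (p.2 : EReal)}) :
    IsGPCS {p : X × ℝ | f₁ p.1 + f₂ p.1 ≤ (p.2 : EReal)} := by
  let E : Set (X × ℝ × ℝ) :=
    ((ContinuousLinearMap.id ℝ X).prodMap (.fst ℝ ℝ ℝ)) ⁻¹' {p | f₁ p.1 ≤ (p.2 : EReal)} ∩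
      ((ContinuousLinearMap.id ℝ X).prodMap (.snd ℝ ℝ ℝ)) ⁻¹' {p | f₂ p.1 ≤ (p.2 : EReal)}
  have hE : IsGPCS E := (hg₁.preimage _).inter (hg₂.preimage _)
  convert (hE.setOf_exists_add_smul_mem (0, 1, -1)).preimage
    ((ContinuousLinearMap.id ℝ X).prodMap (.inr ℝ ℝ ℝ)) using 1
  ext ⟨x, t⟩
  simp [E, EReal.add_le_coe_iff_exists (hf₁ x) (hf₂ x), sub_eq_add_neg]

theorem add_isGPCF_general {X : Type*} [AddCommGroup X] [Module ℝ X] [TopologicalSpace X]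
    [IsTopologicalAddGroup X] [ContinuousSMul ℝ X] [LocallyConvexSpace ℝ X]
    (f₁ f₂ : X → EReal)
    (hp₁ : {x : X | f₁ x ≠ ⊤}.Nonempty ∧ ∀ x, f₁ x ≠ ⊥)
    (hp₂ : {x : X | f₂ x ≠ ⊤}.Nonempty ∧ ∀ x, f₂ x ≠ ⊥)
    (hg₁ : IsGPCS {p : X × ℝ | f₁ p.1 ≤ (p.2 : EReal)})
    (hg₂ : IsGPCS {p : X × ℝ | f₂ p.1 ≤ (p.2 : EReal)})
    (hdom : ({x : X | f₁ x ≠ ⊤} ∩ {x : X | f₂ x ≠ ⊤}).Nonempty) :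
    ({x : X | f₁ x + f₂ x ≠ ⊤}.Nonempty ∧ ∀ x, f₁ x + f₂ x ≠ ⊥) ∧
      IsGPCS {p : X × ℝ | f₁ p.1 + f₂ p.1 ≤ (p.2 : EReal)} := by
  obtain ⟨x, hx₁, hx₂⟩ := hdom
  exact ⟨⟨⟨x, EReal.add_ne_top hx₁ hx₂⟩, fun x => EReal.add_ne_bot_iff.2 ⟨hp₁.2 x, hp₂.2 x⟩⟩,
    isGPCS_epigraph_add hp₁.2 hp₂.2 hg₁ hg₂⟩

/-- The sum of two proper generalized polyhedral convex functions with
intersecting domains is a proper generalized polyhedral convex function. -/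
theorem add_isGPCF {X : Type*} [AddCommGroup X] [Module ℝ X] [TopologicalSpace X]
    [IsTopologicalAddGroup X] [ContinuousSMul ℝ X] [LocallyConvexSpace ℝ X] [T2Space X]
    (f₁ f₂ : X → EReal)
    (hp₁ : {x : X | f₁ x ≠ ⊤}.Nonempty ∧ ∀ x, f₁ x ≠ ⊥)
    (hp₂ : {x : X | f₂ x ≠ ⊤}.Nonempty ∧ ∀ x, f₂ x ≠ ⊥)
    (hg₁ : IsGPCS {p : X × ℝ | f₁ p.1 ≤ (p.2 : EReal)})
    (hg₂ : IsGPCS {p : X × ℝ | f₂ p.1 ≤ (p.2 : EReal)})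
    (hdom : ({x : X | f₁ x ≠ ⊤} ∩ {x : X | f₂ x ≠ ⊤}).Nonempty) :
    ({x : X | f₁ x + f₂ x ≠ ⊤}.Nonempty ∧ ∀ x, f₁ x + f₂ x ≠ ⊥) ∧
      IsGPCS {p : X × ℝ | f₁ p.1 + f₂ p.1 ≤ (p.2 : EReal)} :=
  add_isGPCF_general f₁ f₂ hp₁ hp₂ hg₁ hg₂ hdom
end

section
/- If D ⊆ X is the generalized polyhedral convex set {x | Ax = y, ⟨xᵢ*, x⟩ ≤ αᵢ, i = 1,...,p} and x ∈ D, then the normal cone satisfies N_D(x) = cone{xᵢ* | i ∈ I(x)} + (ker A)^⊥, where I(x) = {i | ⟨xᵢ*, x⟩ = αᵢ} and (ker A)^⊥ = {x* ∈ X* | ⟨x*, u⟩ = 0 for all u ∈ ker A}. -/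
open Pointwise

/-!
A functional `g` is normal to `D` at `x` iff `g ≤ 0` on the feasible directions at `x`. Inactive
constraints do not bind for short steps, so these are the `v ∈ ker A` with `f i v ≤ 0` for the
active `i`. Farkas' lemma on `ker A`, proved by Fourier–Motzkin elimination, then writes `g` on
`ker A` as a nonnegative combination `∑ i, lam i • f i` of the active constraints, and
`g - ∑ i, lam i • f i` annihilates `ker A`.
-/

section Farkas

variable {𝕜 V ι : Type*} [Field 𝕜] [LinearOrder 𝕜] [IsStrictOrderedRing 𝕜]
  [AddCommGroup V] [Module 𝕜 V]

/-- Fourier–Motzkin elimination of `f a`: projecting along `w` onto `ker (f a)` turns the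
system `f a ≤ 0, f i ≤ 0` into the system `f i - f i w • f a ≤ 0`. -/
lemma sub_smul_apply_nonpos_of_apply_eq_one {s : Finset ι} {a : ι} {f : ι → V →ₗ[𝕜] 𝕜}
    {g : V →ₗ[𝕜] 𝕜} {w : V} (hw : f a w = 1)
    (h : ∀ v, f a v ≤ 0 → (∀ i ∈ s, f i v ≤ 0) → g v ≤ 0) (v : V)
    (hv : ∀ i ∈ s, (f i - f i w • f a) v ≤ 0) : (g - g w • f a) v ≤ 0 := by
  have hproj := h (v - f a v • w) (by simp [hw])
    (fun i hi => by simpa [mul_comm] using hv i hi)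
  simpa [mul_comm] using hproj

lemma exists_apply_eq_one_of_not_forall_nonpos {s : Finset ι} {a : ι} {f : ι → V →ₗ[𝕜] 𝕜}
    {g : V →ₗ[𝕜] 𝕜} (h : ∀ v, f a v ≤ 0 → (∀ i ∈ s, f i v ≤ 0) → g v ≤ 0)
    (hs : ¬∀ v, (∀ i ∈ s, f i v ≤ 0) → g v ≤ 0) :
    ∃ w, f a w = 1 ∧ (∀ i ∈ s, f i w ≤ 0) ∧ 0 < g w := by
  push Not at hs
  obtain ⟨w₀, hw₀s, hgw₀⟩ := hs
  have hfw₀ : 0 < f a w₀ := by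
    by_contra! hle
    exact (h w₀ hle hw₀s).not_gt hgw₀
  refine ⟨(f a w₀)⁻¹ • w₀, by simp [hfw₀.ne'], fun i hi => ?_, ?_⟩
  · simpa using mul_nonpos_of_nonneg_of_nonpos (inv_nonneg.2 hfw₀.le) (hw₀s i hi)
  · simpa using mul_pos (inv_pos.2 hfw₀) hgw₀

theorem exists_nonneg_eq_sum_of_forall_nonpos (s : Finset ι) (f : ι → V →ₗ[𝕜] 𝕜)
    (g : V →ₗ[𝕜] 𝕜) (h : ∀ v, (∀ i ∈ s, f i v ≤ 0) → g v ≤ 0) :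
    ∃ lam : ι → 𝕜, (∀ i, 0 ≤ lam i) ∧ (∀ i ∉ s, lam i = 0) ∧ g = ∑ i ∈ s, lam i • f i := by
  classical
  induction s using Finset.induction_on generalizing f g with
  | empty =>
    refine ⟨0, fun _ => le_rfl, fun _ _ => rfl, LinearMap.ext fun v => ?_⟩
    simpa using le_antisymm (h v (by simp)) (by simpa using h (-v) (by simp))
  | insert a s ha ih =>
    simp only [Finset.forall_mem_insert, and_imp] at h
    by_cases hs : ∀ v, (∀ i ∈ s, f i v ≤ 0) → g v ≤ 0
    · obtain ⟨lam, hlam, hlam0, rfl⟩ := ih f g hs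
      refine ⟨lam, hlam, fun i hi => hlam0 i (by simp_all), ?_⟩
      simp [Finset.sum_insert ha, hlam0 a ha]
    obtain ⟨w, hw, hws, hgw⟩ := exists_apply_eq_one_of_not_forall_nonpos h hs
    obtain ⟨μ, hμ, hμ0, hμg⟩ := ih (fun i => f i - f i w • f a) (g - g w • f a)
      (sub_smul_apply_nonpos_of_apply_eq_one hw h)
    have hsum : ∑ i ∈ s, μ i * f i w ≤ 0 :=
      Finset.sum_nonpos fun i hi => mul_nonpos_of_nonneg_of_nonpos (hμ i) (hws i hi)
    refine ⟨Function.update μ a (g w - ∑ i ∈ s, μ i * f i w), fun i => ?_, fun i hi => ?_, ?_⟩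
    · rcases eq_or_ne i a with rfl | hia
      · simp only [Function.update_self]; linarith
      · simpa [hia] using hμ i
    · simp_all
    · rw [Finset.sum_insert ha, Function.update_self, Finset.sum_congr rfl (g := fun i => μ i • f i)
        fun i hi => by rw [Function.update_of_ne (ne_of_mem_of_not_mem hi ha)]]
      simp only [smul_sub, Finset.sum_sub_distrib, smul_smul, ← Finset.sum_smul] at hμg
      linear_combination (norm := module) hμg

theorem exists_nonneg_forall_mem_eq_sum_of_forall_mem_nonpos (K : Submodule 𝕜 V) (s : Finset ι)
    (f : ι → V →ₗ[𝕜] 𝕜) (g : V →ₗ[𝕜] 𝕜) (h : ∀ v ∈ K, (∀ i ∈ s, f i v ≤ 0) → g v ≤ 0) :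
    ∃ lam : ι → 𝕜, (∀ i, 0 ≤ lam i) ∧ (∀ i ∉ s, lam i = 0) ∧
      ∀ v ∈ K, g v = ∑ i ∈ s, lam i * f i v := by
  obtain ⟨lam, hlam, hlam0, hg⟩ := exists_nonneg_eq_sum_of_forall_nonpos s
    (fun i => f i ∘ₗ K.subtype) (g ∘ₗ K.subtype) fun v hv => h v v.2 hv
  exact ⟨lam, hlam, hlam0, fun v hv => by simpa using LinearMap.congr_fun hg ⟨v, hv⟩⟩

end Farkas

open Filter Topology

lemma eventually_add_mul_le {a b c : ℝ} (hac : a ≤ c) (hb : a = c → b ≤ 0) :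
    ∀ᶠ t in 𝓝[>] 0, a + t * b ≤ c := by
  rcases hac.lt_or_eq with hlt | heq
  · have hlim : Tendsto (fun t => a + t * b) (𝓝[>] 0) (𝓝 a) :=
      (Continuous.tendsto' (by fun_prop) 0 a (by simp)).mono_left nhdsWithin_le_nhds
    exact hlim.eventually (eventually_le_nhds hlt)
  · filter_upwards [self_mem_nhdsWithin] with t (ht : 0 < t)
    linarith [mul_nonpos_of_nonneg_of_nonpos ht.le (hb heq)]

lemma exists_pos_forall_add_smul_le {V ι : Type*} [AddCommGroup V] [Module ℝ V] [Finite ι]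
    (f : ι → V →ₗ[ℝ] ℝ) (α : ι → ℝ) {x v : V} (hx : ∀ i, f i x ≤ α i)
    (hv : ∀ i, f i x = α i → f i v ≤ 0) : ∃ t : ℝ, 0 < t ∧ ∀ i, f i (x + t • v) ≤ α i := by
  obtain ⟨t, ht, htpos⟩ :=
    ((eventually_all.2 fun i => eventually_add_mul_le (hx i) (hv i)).and
      self_mem_nhdsWithin).exists
  exact ⟨t, htpos, fun i => by simpa using ht i⟩

theorem forall_apply_sub_nonpos_iff {V W ι : Type*} [AddCommGroup V] [Module ℝ V]
    [AddCommGroup W] [Module ℝ W] [Fintype ι] (A : V →ₗ[ℝ] W) (y : W) (f : ι → V →ₗ[ℝ] ℝ)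
    (α : ι → ℝ) {x : V} (hx : x ∈ {u | A u = y ∧ ∀ i, f i u ≤ α i}) (g : V →ₗ[ℝ] ℝ) :
    (∀ u ∈ {u | A u = y ∧ ∀ i, f i u ≤ α i}, g (u - x) ≤ 0) ↔
      ∃ lam : ι → ℝ, (∀ i, 0 ≤ lam i) ∧ (∀ i, f i x ≠ α i → lam i = 0) ∧
        ∀ u, A u = 0 → g u = ∑ i, lam i * f i u := by
  classical
  obtain ⟨hAx, hfx⟩ := hx
  constructor
  · intro hg
    set active := Finset.univ.filter fun i => f i x = α i
    have hcone : ∀ v ∈ LinearMap.ker A, (∀ i ∈ active, f i v ≤ 0) → g v ≤ 0 := by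
      intro v hAv hv
      obtain ⟨t, ht, hxt⟩ := exists_pos_forall_add_smul_le f α hfx
        fun i hi => hv i (by simpa [active] using hi)
      have := hg (x + t • v) ⟨by simp_all, hxt⟩
      simp only [add_sub_cancel_left, map_smul, smul_eq_mul] at this
      exact nonpos_of_mul_nonpos_right this ht
    obtain ⟨lam, hlam, hlam0, hgK⟩ :=
      exists_nonneg_forall_mem_eq_sum_of_forall_mem_nonpos _ active f g hcone
    refine ⟨lam, hlam, fun i hi => hlam0 i (by simpa [active] using hi), fun u hu => ?_⟩
    rw [hgK u hu, Finset.sum_subset (Finset.subset_univ _) fun i _ hi => by simp [hlam0 i hi]]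
  · rintro ⟨lam, hlam, hlam0, hker⟩ u ⟨hAu, hfu⟩
    rw [hker (u - x) (by simp [hAu, hAx])]
    refine Finset.sum_nonpos fun i _ => ?_
    by_cases hi : f i x = α i
    · exact mul_nonpos_of_nonneg_of_nonpos (hlam i) (by simp [hi, hfu i])
    · simp [hlam0 i hi]

theorem normalCone_gpcs_general {X : Type*} [AddCommGroup X] [Module ℝ X] [TopologicalSpace X]
    {Y : Type*} [AddCommGroup Y] [Module ℝ Y] [TopologicalSpace Y]
    (A : X →L[ℝ] Y) (y : Y)
    (p : ℕ) (f : Fin p → (X →L[ℝ] ℝ)) (α : Fin p → ℝ)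
    (D : Set X) (hD : D = {x : X | A x = y ∧ ∀ i, f i x ≤ α i})
    (x : X) (hx : x ∈ D) :
    {g : X →L[ℝ] ℝ | ∀ u ∈ D, g (u - x) ≤ 0} =
      {g : X →L[ℝ] ℝ | ∃ lam : Fin p → ℝ, (∀ i, 0 ≤ lam i) ∧
          (∀ i, f i x ≠ α i → lam i = 0) ∧ g = ∑ i, lam i • f i} +
        {g : X →L[ℝ] ℝ | ∀ u : X, A u = 0 → g u = 0} := by
  subst hD
  ext g
  refine (forall_apply_sub_nonpos_iff (A : X →ₗ[ℝ] Y) y (fun i => f i) α hx g).trans ?_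
  rw [Set.mem_add]
  constructor
  · rintro ⟨lam, hlam, hlam0, hker⟩
    refine ⟨∑ i, lam i • f i, ⟨lam, hlam, hlam0, rfl⟩, g - ∑ i, lam i • f i, fun u hu => ?_,
      add_sub_cancel _ _⟩
    have hgu : g u = ∑ i, lam i * f i u := hker u hu
    simp [hgu]
  · rintro ⟨_, ⟨lam, hlam, hlam0, rfl⟩, g₂, hg₂, rfl⟩
    exact ⟨lam, hlam, hlam0, fun u hu => by simp [hg₂ u hu]⟩

/-- Formula for the normal cone to a generalized polyhedral convex set. -/
theorem normalCone_gpcs {X : Type*} [AddCommGroup X] [Module ℝ X] [TopologicalSpace X]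
    [IsTopologicalAddGroup X] [ContinuousSMul ℝ X] [LocallyConvexSpace ℝ X] [T2Space X] {Y : Type*} [AddCommGroup Y] [Module ℝ Y] [TopologicalSpace Y]
    [IsTopologicalAddGroup Y] [ContinuousSMul ℝ Y] [LocallyConvexSpace ℝ Y] [T2Space Y]
    (A : X →L[ℝ] Y) (hA : Function.Surjective A) (y : Y)
    (p : ℕ) (f : Fin p → (X →L[ℝ] ℝ)) (α : Fin p → ℝ)
    (D : Set X) (hD : D = {x : X | A x = y ∧ ∀ i, f i x ≤ α i})
    (x : X) (hx : x ∈ D) :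
    {g : X →L[ℝ] ℝ | ∀ u ∈ D, g (u - x) ≤ 0} =
      {g : X →L[ℝ] ℝ | ∃ lam : Fin p → ℝ, (∀ i, 0 ≤ lam i) ∧
          (∀ i, f i x ≠ α i → lam i = 0) ∧ g = ∑ i, lam i • f i} +
        {g : X →L[ℝ] ℝ | ∀ u : X, A u = 0 → g u = 0} :=
  normalCone_gpcs_general A y p f α D hD x hx
end

section
/- If D₁ ⊆ X is a polyhedral convex set, D₂ ⊆ X is a generalized polyhedral convex set, and x ∈ D₁ ∩ D₂, then N_{D₁ ∩ D₂}(x) = N_{D₁}(x) + N_{D₂}(x) (exact normal cone intersection rule, with no closure needed). -/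
open Pointwise

/-!
Write `D₁ ∩ D₂` as a single generalized polyhedral set: the affine subspace `x₀ + W` cut by the
constraints of both sets. If `g` is normal to it at `x`, then `g v ≤ 0` for every `v ∈ W` on which
the active constraints are nonpositive, because `x + t • v` stays feasible for small `t > 0`. The
Farkas lemma on `W`, which for finitely many functionals is purely algebraic and so needs no
closure, writes `g` on `W` as a nonnegative combination of the active constraints. The part coming
from `D₁` is normal to `D₁`; the rest agrees on `W ⊇ D₂ - x` with a nonnegative combination of
active constraints of `D₂`, so it is normal to `D₂`.
-/

open Filter Topology

section Farkas

open Finset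

variable {V ι : Type*} [AddCommGroup V] [Module ℝ V]

theorem LinearMap.eq_smul_add_sum_of_comp_eq (ℓ : V →ₗ[ℝ] ℝ) (w : V) (s : Finset ι)
    (f : ι → V →ₗ[ℝ] ℝ) (μ : ι → ℝ) (g : V →ₗ[ℝ] ℝ)
    (h : g ∘ₗ (id - ℓ.smulRight w) = ∑ i ∈ s, μ i • f i ∘ₗ (id - ℓ.smulRight w)) :
    g = (g w - ∑ i ∈ s, μ i * f i w) • ℓ + ∑ i ∈ s, μ i • f i := by
  ext v
  have hv := LinearMap.congr_fun h v
  simp only [comp_apply, sub_apply, id_apply, smulRight_apply, map_sub, map_smul, smul_eq_mul,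
    sum_apply, smul_apply, mul_sub, sum_sub_distrib] at hv
  have hcomm : ∑ i ∈ s, μ i * (ℓ v * f i w) = ∑ i ∈ s, μ i * f i w * ℓ v :=
    sum_congr rfl fun _ _ => by ring
  simp only [add_apply, smul_apply, sum_apply, smul_eq_mul, sub_mul, sum_mul]
  linarith

theorem exists_nonneg_sum_smul_eq_of_nonpos_imp_nonpos [DecidableEq ι] (s : Finset ι)
    (f : ι → V →ₗ[ℝ] ℝ) (g : V →ₗ[ℝ] ℝ) (h : ∀ v, (∀ i ∈ s, f i v ≤ 0) → g v ≤ 0) :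
    ∃ c : ι → ℝ, (∀ i, 0 ≤ c i) ∧ (∀ i ∉ s, c i = 0) ∧ g = ∑ i ∈ s, c i • f i := by
  induction s using Finset.induction_on generalizing f g with
  | empty =>
    refine ⟨0, fun _ => le_rfl, fun _ _ => rfl, LinearMap.ext fun v => ?_⟩
    have h₁ := h v (by simp)
    have h₂ := h (-v) (by simp)
    simp only [map_neg, neg_nonpos] at h₂
    simpa using le_antisymm h₁ h₂
  | insert a s ha ih =>
    by_cases hred : ∀ v, (∀ i ∈ s, f i v ≤ 0) → g v ≤ 0
    · obtain ⟨c, hc₀, hcs, rfl⟩ := ih f g hred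
      refine ⟨c, hc₀, fun i hi => hcs i (by simp_all), ?_⟩
      rw [sum_insert ha, hcs a ha, zero_smul, zero_add]
    push Not at hred
    obtain ⟨w₀, hw₀s, hgw₀⟩ := hred
    have hfw₀ : 0 < f a w₀ := by
      by_contra! hle
      exact hgw₀.not_ge (h w₀ (forall_mem_insert _ _ _ |>.2 ⟨hle, hw₀s⟩))
    -- Normalise `w₀` and project along it onto `ker (f a)`, which removes the constraint `a`.
    set w := (f a w₀)⁻¹ • w₀
    have hfw : f a w = 1 := by simp [w, hfw₀.ne']
    have hws : ∀ i ∈ s, f i w ≤ 0 := fun i hi => by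
      simpa [w] using mul_nonpos_of_nonneg_of_nonpos (inv_nonneg.2 hfw₀.le) (hw₀s i hi)
    have hgw : 0 < g w := by simpa [w] using mul_pos (inv_pos.2 hfw₀) hgw₀
    set P : V →ₗ[ℝ] V := LinearMap.id - (f a).smulRight w
    obtain ⟨μ, hμ₀, hμs, hgμ⟩ := ih (fun i => f i ∘ₗ P) (g ∘ₗ P) fun v hv =>
      h (P v) (forall_mem_insert _ _ _ |>.2 ⟨by simp [P, hfw], hv⟩)
    set c₀ := g w - ∑ i ∈ s, μ i * f i w
    have hc₀ : 0 ≤ c₀ := by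
      have : ∑ i ∈ s, μ i * f i w ≤ 0 :=
        sum_nonpos fun i hi => mul_nonpos_of_nonneg_of_nonpos (hμ₀ i) (hws i hi)
      linarith
    refine ⟨Function.update μ a c₀, fun i => ?_, fun i hi => ?_, ?_⟩
    · rcases eq_or_ne i a with rfl | hia
      · simpa using hc₀
      · simpa [hia] using hμ₀ i
    · rw [mem_insert, not_or] at hi
      simpa [hi.1] using hμs i hi.2
    · have hupd : ∑ i ∈ s, Function.update μ a c₀ i • f i = ∑ i ∈ s, μ i • f i :=
        sum_congr rfl fun i hi => by rw [Function.update_of_ne (ne_of_mem_of_not_mem hi ha)]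
      rw [sum_insert ha, hupd, Function.update_self]
      exact (f a).eq_smul_add_sum_of_comp_eq w s f μ g hgμ

end Farkas

theorem eventually_nhdsGT_mul_le {a b : ℝ} (ha : 0 ≤ a) (h : b ≤ 0 ∨ 0 < a) :
    ∀ᶠ t in 𝓝[>] 0, t * b ≤ a := by
  rcases h with hb | ha
  · filter_upwards [self_mem_nhdsWithin] with t (ht : 0 < t)
    exact (mul_nonpos_of_nonneg_of_nonpos ht.le hb).trans ha
  · have hlim : Tendsto (fun t => t * b) (𝓝[>] 0) (𝓝 0) := by
      simpa using ((continuous_mul_const b).tendsto 0).mono_left nhdsWithin_le_nhds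
    exact (hlim.eventually (eventually_le_nhds ha))

section NormalCone

variable {X ι : Type*} [AddCommGroup X] [Module ℝ X]

theorem mem_vadd_submodule_iff_sub_mem {W : Submodule ℝ X} {x₀ x u : X}
    (hx : x ∈ x₀ +ᵥ (W : Set X)) : u ∈ x₀ +ᵥ (W : Set X) ↔ u - x ∈ W := by
  simp only [Set.mem_vadd_set_iff_neg_vadd_mem, vadd_eq_add, neg_add_eq_sub, SetLike.mem_coe]
    at hx ⊢
  rw [← W.sub_mem_iff_left hx, sub_sub_sub_cancel_right]

variable [TopologicalSpace X]

def normalCone (C : Set X) (x : X) : Set (X →L[ℝ] ℝ) :=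
  {g | ∀ u ∈ C, g (u - x) ≤ 0}

theorem add_subset_normalCone_inter (C₁ C₂ : Set X) (x : X) :
    normalCone C₁ x + normalCone C₂ x ⊆ normalCone (C₁ ∩ C₂) x := by
  rintro _ ⟨g₁, hg₁, g₂, hg₂, rfl⟩ u ⟨hu₁, hu₂⟩
  simpa using add_nonpos (hg₁ u hu₁) (hg₂ u hu₂)

variable [Fintype ι] {D : Set X} {W : Submodule ℝ X} {f : ι → X →L[ℝ] ℝ} {α : ι → ℝ} {x : X}

theorem eventually_add_smul_mem (hD : ∀ u, u - x ∈ W → (∀ i, f i u ≤ α i) → u ∈ D)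
    (hx : ∀ i, f i x ≤ α i) {v : X} (hv : v ∈ W) (hact : ∀ i, f i x = α i → f i v ≤ 0) :
    ∀ᶠ t in 𝓝[>] (0 : ℝ), x + t • v ∈ D := by
  have hi : ∀ i, ∀ᶠ t in 𝓝[>] (0 : ℝ), t * f i v ≤ α i - f i x := fun i =>
    eventually_nhdsGT_mul_le (sub_nonneg.2 (hx i)) <|
      (eq_or_lt_of_le (hx i)).imp (hact i) sub_pos.2
  filter_upwards [eventually_all.2 hi] with t ht
  refine hD _ (by simpa using W.smul_mem t hv) fun i => ?_
  simp only [map_add, map_smul, smul_eq_mul]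
  linarith [ht i]

theorem exists_multipliers_of_mem_normalCone
    (hD : ∀ u, u - x ∈ W → (∀ i, f i u ≤ α i) → u ∈ D) (hx : ∀ i, f i x ≤ α i)
    {g : X →L[ℝ] ℝ} (hg : g ∈ normalCone D x) :
    ∃ c : ι → ℝ, (∀ i, 0 ≤ c i) ∧ (∀ i, c i ≠ 0 → f i x = α i) ∧
      ∀ w ∈ W, g w = ∑ i, c i * f i w := by
  classical
  set s := Finset.univ.filter fun i => f i x = α i
  have hdir : ∀ v : W, (∀ i ∈ s, (f i : X →ₗ[ℝ] ℝ).domRestrict W v ≤ 0) →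
      (g : X →ₗ[ℝ] ℝ).domRestrict W v ≤ 0 := by
    rintro ⟨v, hv⟩ hvs
    obtain ⟨t, htD, ht⟩ := ((eventually_add_smul_mem hD hx hv fun i hi =>
      hvs i (by simpa [s] using hi)).and self_mem_nhdsWithin).exists
    have := hg _ htD
    simp only [add_sub_cancel_left, map_smul, smul_eq_mul] at this
    exact nonpos_of_mul_nonpos_right this ht
  obtain ⟨c, hc₀, hcs, hgc⟩ := exists_nonneg_sum_smul_eq_of_nonpos_imp_nonpos s _ _ hdir
  refine ⟨c, hc₀, fun i hi => by simpa [s] using not_imp_comm.1 (hcs i) hi, fun w hw => ?_⟩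
  have := LinearMap.congr_fun hgc ⟨w, hw⟩
  simp only [LinearMap.domRestrict_apply, LinearMap.sum_apply, LinearMap.smul_apply,
    smul_eq_mul, ContinuousLinearMap.coe_coe] at this
  rw [this]
  exact Finset.sum_subset (Finset.subset_univ s) fun i _ hi => by simp [hcs i hi]

theorem mem_normalCone_of_multipliers (hD : ∀ u ∈ D, ∀ i, f i u ≤ α i) {c : ι → ℝ}
    (hc₀ : ∀ i, 0 ≤ c i) (hc : ∀ i, c i ≠ 0 → f i x = α i) {g : X →L[ℝ] ℝ}
    (hg : ∀ u ∈ D, g (u - x) = ∑ i, c i * f i (u - x)) : g ∈ normalCone D x := by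
  intro u hu
  rw [hg u hu]
  refine Finset.sum_nonpos fun i _ => ?_
  rcases eq_or_ne (c i) 0 with h0 | h0
  · simp [h0]
  · refine mul_nonpos_of_nonneg_of_nonpos (hc₀ i) ?_
    rw [map_sub, hc i h0]
    exact sub_nonpos.2 (hD u hu i)

end NormalCone

theorem normalCone_inter_pcs_gpcs_general {X : Type*} [AddCommGroup X] [Module ℝ X] [TopologicalSpace X]
    (D₁ D₂ : Set X) (h₁ : IsPCS D₁) (h₂ : IsGPCS D₂) (x : X) (hx : x ∈ D₁ ∩ D₂) :
    {g : X →L[ℝ] ℝ | ∀ u ∈ D₁ ∩ D₂, g (u - x) ≤ 0} =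
      {g : X →L[ℝ] ℝ | ∀ u ∈ D₁, g (u - x) ≤ 0} +
        {g : X →L[ℝ] ℝ | ∀ u ∈ D₂, g (u - x) ≤ 0} := by
  obtain ⟨p, f, α, rfl⟩ := h₁
  obtain ⟨q, h, β, x₀, W, -, rfl⟩ := h₂
  obtain ⟨hxf, hxW, hxh⟩ := hx
  have hW := fun u => mem_vadd_submodule_iff_sub_mem (u := u) hxW
  change normalCone _ x = normalCone _ x + normalCone _ x
  refine Set.Subset.antisymm (fun g hg => ?_) (add_subset_normalCone_inter _ _ x)
  obtain ⟨c, hc₀, hc, hgc⟩ := exists_multipliers_of_mem_normalCone (W := W)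
    (f := Sum.elim f h) (α := Sum.elim α β)
    (fun u huW hu => by exact ⟨fun i => hu (.inl i), (hW u).2 huW, fun j => hu (.inr j)⟩)
    (Sum.forall.2 ⟨hxf, hxh⟩) hg
  set g₁ := ∑ i, c (.inl i) • f i
  refine ⟨g₁, ?_, g - g₁, ?_, add_sub_cancel g₁ g⟩
  · exact mem_normalCone_of_multipliers (c := c ∘ .inl) (fun u hu => hu) (fun _ => hc₀ _)
      (fun _ => hc _) fun u _ => by simp [g₁]
  · refine mem_normalCone_of_multipliers (c := c ∘ .inr) (fun u hu => hu.2) (fun _ => hc₀ _)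
      (fun _ => hc _) fun u hu => ?_
    rw [sub_apply, hgc _ ((hW u).1 hu.1), Fintype.sum_sum_type]
    simp [g₁]

/-- Exact normal cone intersection rule for a polyhedral convex set and a
generalized polyhedral convex set. -/
theorem normalCone_inter_pcs_gpcs {X : Type*} [AddCommGroup X] [Module ℝ X] [TopologicalSpace X]
    [IsTopologicalAddGroup X] [ContinuousSMul ℝ X] [LocallyConvexSpace ℝ X] [T2Space X]
    (D₁ D₂ : Set X) (h₁ : IsPCS D₁) (h₂ : IsGPCS D₂) (x : X) (hx : x ∈ D₁ ∩ D₂) :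
    {g : X →L[ℝ] ℝ | ∀ u ∈ D₁ ∩ D₂, g (u - x) ≤ 0} =
      {g : X →L[ℝ] ℝ | ∀ u ∈ D₁, g (u - x) ≤ 0} +
        {g : X →L[ℝ] ℝ | ∀ u ∈ D₂, g (u - x) ≤ 0} :=
  normalCone_inter_pcs_gpcs_general D₁ D₂ h₁ h₂ x hx
end
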